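/- arXiv:0710.2208 — 3 statements merged into one kernel-verified Lean document; each statement's English description precedes it below -/
import Mathlib

section
/- The bracket 𝔤₋₁ ⊗ 𝔤₋₂ → 𝔤₋₃ induced by the matrix commutator is a linear isomorphism of 2-dimensional vector spaces (𝔤₋₂ being 1-dimensional and 𝔤₋₁, 𝔤₋₃ being 2-dimensional): for every nonzero r ∈ 𝔤₋₂ the map X ↦ [X, r] is a linear isomorphism 𝔤₋₁ → 𝔤₋₃. -/
open Matrix

noncomputable section

/-- The paper's 7×7 block-matrix presentation of the split Lie algebra of type G₂,
parametrized by `A ∈ gl(2,ℝ)`, column vectors `X Y ∈ ℝ²`, row vectors `Z W ∈ (ℝ²)*`,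
and scalars `r s ∈ ℝ`. -/
def g2mat (A : Matrix (Fin 2) (Fin 2) ℝ) (X Y Z W : Fin 2 → ℝ) (r s : ℝ) :
    Matrix (Fin 7) (Fin 7) ℝ :=
  !![A 0 0 + A 1 1, Z 0, Z 1, s, W 0, W 1, 0;
     X 0, A 0 0, A 0 1, -(Real.sqrt 2 * Z 1), 0, -(s / Real.sqrt 2), -W 0;
     X 1, A 1 0, A 1 1, Real.sqrt 2 * Z 0, s / Real.sqrt 2, 0, -W 1;
     r, -(Real.sqrt 2 * X 1), Real.sqrt 2 * X 0, 0, -(Real.sqrt 2 * Z 1), Real.sqrt 2 * Z 0, s;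
     Y 0, 0, r / Real.sqrt 2, -(Real.sqrt 2 * X 1), -A 0 0, -A 1 0, -Z 0;
     Y 1, -(r / Real.sqrt 2), 0, Real.sqrt 2 * X 0, -A 0 1, -A 1 1, -Z 1;
     0, -Y 0, -Y 1, r, -X 0, -X 1, -(A 0 0 + A 1 1)]

/-- The split G₂ Lie algebra 𝔤 as a set of 7×7 real matrices. -/
def g2set : Set (Matrix (Fin 7) (Fin 7) ℝ) :=
  {M | ∃ A X Y Z W r s, M = g2mat A X Y Z W r s}

/-- The graded piece 𝔤₋₃ (parameter `Y`). -/
def gm3 (Y : Fin 2 → ℝ) : Matrix (Fin 7) (Fin 7) ℝ := g2mat 0 0 Y 0 0 0 0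
/-- The graded piece 𝔤₋₂ (parameter `r`). -/
def gm2 (r : ℝ) : Matrix (Fin 7) (Fin 7) ℝ := g2mat 0 0 0 0 0 r 0
/-- The graded piece 𝔤₋₁ (parameter `X`). -/
def gm1 (X : Fin 2 → ℝ) : Matrix (Fin 7) (Fin 7) ℝ := g2mat 0 X 0 0 0 0 0
/-- The graded piece 𝔤₀ (parameter `A`). -/
def g0m (A : Matrix (Fin 2) (Fin 2) ℝ) : Matrix (Fin 7) (Fin 7) ℝ := g2mat A 0 0 0 0 0 0
/-- The graded piece 𝔤₁ (parameter `Z`). -/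
def g1m (Z : Fin 2 → ℝ) : Matrix (Fin 7) (Fin 7) ℝ := g2mat 0 0 0 Z 0 0 0
/-- The graded piece 𝔤₂ (parameter `s`). -/
def g2m (s : ℝ) : Matrix (Fin 7) (Fin 7) ℝ := g2mat 0 0 0 0 0 0 s
/-- The graded piece 𝔤₃ (parameter `W`). -/
def g3m (W : Fin 2 → ℝ) : Matrix (Fin 7) (Fin 7) ℝ := g2mat 0 0 0 0 W 0 0

/-- The pairing B(M,N) = (1/6)·tr(MN). -/
def Bpair (M N : Matrix (Fin 7) (Fin 7) ℝ) : ℝ := (1 / 6 : ℝ) * (M * N).trace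

section QuarterTurn

variable (R : Type*) [Ring R]

def quarterTurn : (Fin 2 → R) ≃ₗ[R] (Fin 2 → R) where
  toFun X := ![-X 1, X 0]
  invFun Y := ![Y 1, -Y 0]
  map_add' X Y := by ext i; fin_cases i <;> simp [add_comm]
  map_smul' c X := by ext i; fin_cases i <;> simp
  left_inv X := by ext i; fin_cases i <;> simp
  right_inv Y := by ext i; fin_cases i <;> simp

@[simp]
theorem quarterTurn_apply (X : Fin 2 → R) : quarterTurn R X = ![-X 1, X 0] := rfl

end QuarterTurn

set_option maxHeartbeats 400000 in
/-- The constant `3√2/2 = √2 + 1/√2` collects the entries `±√2 X i` of `gm1 X` and `±r/√2` of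
`gm2 r`. -/
theorem gm1_mul_gm2_sub_gm2_mul_gm1 (X : Fin 2 → ℝ) (r : ℝ) :
    gm1 X * gm2 r - gm2 r * gm1 X = gm3 ((3 * Real.sqrt 2 / 2 * r) • quarterTurn ℝ X) := by
  have hdiv : r / Real.sqrt 2 = Real.sqrt 2 / 2 * r := by
    rw [div_eq_iff (by positivity)]
    linear_combination -r / 2 * Real.sq_sqrt zero_le_two
  ext i j
  fin_cases i <;> fin_cases j <;> simp [gm1, gm2, gm3, g2mat, hdiv] <;> ring

/-- For every nonzero r ∈ 𝔤₋₂, the bracket X ↦ [X, r] is a linear isomorphism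
𝔤₋₁ → 𝔤₋₃. -/
theorem bracket_gm1_gm2_iso :
    ∀ r : ℝ, r ≠ 0 → ∃ T : (Fin 2 → ℝ) ≃ₗ[ℝ] (Fin 2 → ℝ),
      ∀ X : Fin 2 → ℝ, gm1 X * gm2 r - gm2 r * gm1 X = gm3 (T X) := by
  intro r hr
  have hc : 3 * Real.sqrt 2 / 2 * r ≠ 0 := by positivity
  exact ⟨(quarterTurn ℝ).trans (LinearEquiv.smulOfNeZero ℝ _ _ hc),
    fun X => gm1_mul_gm2_sub_gm2_mul_gm1 X r⟩

end
end

section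
/- The pairing B(M, N) = (1/6)·tr(MN) on the split G₂ Lie algebra 𝔤 restricts to a perfect pairing between 𝔤ᵢ and 𝔤₋ᵢ for i = 1, 2, 3, given explicitly in parameters by (X, Z) ↦ ZX, (r, s) ↦ (1/2)rs, and (Y, W) ↦ (1/3)WY. -/
open Matrix

noncomputable section

/- In parameters each pairing is a nonzero multiple of the dot product (the entries scaled by
`√2` contribute through `√2 ^ 2 = 2`), and the dot product is nondegenerate. -/

lemma Bpair_gm1_g1m (X Z : Fin 2 → ℝ) : Bpair (gm1 X) (g1m Z) = Z ⬝ᵥ X := by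
  simp [Bpair, gm1, g1m, g2mat, trace, Fin.sum_univ_succ, vec2_dotProduct]
  ring_nf
  rw [Real.sq_sqrt zero_le_two]
  ring

lemma Bpair_gm2_g2m (r s : ℝ) : Bpair (gm2 r) (g2m s) = 1 / 2 * (r * s) := by
  simp [Bpair, gm2, g2m, g2mat, trace, Fin.sum_univ_succ]
  field_simp
  ring_nf
  rw [Real.sq_sqrt zero_le_two]
  ring

lemma Bpair_gm3_g3m (Y W : Fin 2 → ℝ) : Bpair (gm3 Y) (g3m W) = 1 / 3 * (W ⬝ᵥ Y) := by
  simp [Bpair, gm3, g3m, g2mat, trace, Fin.sum_univ_succ, vec2_dotProduct]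
  ring

/-- The pairing B(M,N) = (1/6)tr(MN) restricts to a perfect pairing between 𝔤ᵢ and 𝔤₋ᵢ
for i = 1,2,3, given in parameters by (X,Z) ↦ ZX, (r,s) ↦ (1/2)rs, (Y,W) ↦ (1/3)WY. -/
theorem B_perfect_pairings :
    (∀ X Z : Fin 2 → ℝ, Bpair (gm1 X) (g1m Z) = Z 0 * X 0 + Z 1 * X 1) ∧
    (∀ r s : ℝ, Bpair (gm2 r) (g2m s) = (1 / 2) * (r * s)) ∧
    (∀ Y W : Fin 2 → ℝ, Bpair (gm3 Y) (g3m W) = (1 / 3) * (W 0 * Y 0 + W 1 * Y 1)) ∧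
    (∀ Z : Fin 2 → ℝ, (∀ X : Fin 2 → ℝ, Bpair (gm1 X) (g1m Z) = 0) → Z = 0) ∧
    (∀ X : Fin 2 → ℝ, (∀ Z : Fin 2 → ℝ, Bpair (gm1 X) (g1m Z) = 0) → X = 0) ∧
    (∀ s : ℝ, (∀ r : ℝ, Bpair (gm2 r) (g2m s) = 0) → s = 0) ∧
    (∀ r : ℝ, (∀ s : ℝ, Bpair (gm2 r) (g2m s) = 0) → r = 0) ∧
    (∀ W : Fin 2 → ℝ, (∀ Y : Fin 2 → ℝ, Bpair (gm3 Y) (g3m W) = 0) → W = 0) ∧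
    (∀ Y : Fin 2 → ℝ, (∀ W : Fin 2 → ℝ, Bpair (gm3 Y) (g3m W) = 0) → Y = 0) := by
  refine ⟨fun X Z => (Bpair_gm1_g1m X Z).trans (vec2_dotProduct Z X),
    Bpair_gm2_g2m,
    fun Y W => (Bpair_gm3_g3m Y W).trans (by rw [vec2_dotProduct]),
    fun Z h => dotProduct_eq_zero Z fun X => by simpa [Bpair_gm1_g1m] using h X,
    fun X h => dotProduct_eq_zero X fun Z => by simpa [Bpair_gm1_g1m, dotProduct_comm] using h Z,
    fun s h => by simpa [Bpair_gm2_g2m] using h 1,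
    fun r h => by simpa [Bpair_gm2_g2m] using h 1,
    fun W h => dotProduct_eq_zero W fun Y => by simpa [Bpair_gm3_g3m] using h Y,
    fun Y h => dotProduct_eq_zero Y fun W => by simpa [Bpair_gm3_g3m, dotProduct_comm] using h W⟩

end
end

section
/- In the split G₂ Lie algebra 𝔤 of the paper, the bracket {·,·}: 𝔤₁ × 𝔤₋₂ → 𝔤₋₁ satisfies, for every linear functional ψ ∈ 𝔤₁ ≅ (𝔤₋₁)* (identified via B) and all ξ, η ∈ 𝔤₋₁: [ψ, [ξ, η]] = 4·(ψ(ξ)·η − ψ(η)·ξ), where ψ(ξ) := B(ψ, ξ). -/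
open Matrix

noncomputable section

/-! By the grading, `[ξ, η]` lies in `𝔤₋₂ ≅ ℝ` and `[ψ, 𝔤₋₂] ⊆ 𝔤₋₁`. In the matrix model
`[ξ, η] = 2√2 · det(ξ, η)` and `[ψ, r] = √2 r · Jψ` with `Jψ = (-ψ₁, ψ₀)`, so the left-hand side
is `4 det(ξ, η) · Jψ`, and the claim is the planar identity `(ψ·ξ) η - (ψ·η) ξ = det(ξ, η) · Jψ`. -/

theorem dotProduct_smul_sub_dotProduct_smul_fin_two {R : Type*} [CommRing R]
    (ψ ξ η : Fin 2 → R) :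
    (ψ ⬝ᵥ ξ) • η - (ψ ⬝ᵥ η) • ξ = (ξ 0 * η 1 - ξ 1 * η 0) • ![-ψ 1, ψ 0] := by
  ext i
  fin_cases i <;> simp [vec2_dotProduct] <;> ring

theorem lie_gm1_gm1 (ξ η : Fin 2 → ℝ) :
    ⁅gm1 ξ, gm1 η⁆ = gm2 (2 * Real.sqrt 2 * (ξ 0 * η 1 - ξ 1 * η 0)) := by
  have h2 : Real.sqrt 2 * Real.sqrt 2 = 2 := Real.mul_self_sqrt zero_le_two
  simp only [gm1, g2mat, Matrix.zero_apply, add_zero, Pi.zero_apply, ← zero_empty,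
    cons_zero_zero, Fin.isValue, mul_zero, neg_zero, zero_div, Ring.lie_def, cons_mul,
    Nat.succ_eq_add_one, Nat.reduceAdd, zero_vecMul, vecMul_cons, head_cons, smul_zero,
    tail_cons, neg_smul, smul_cons, smul_eq_mul, neg_cons, add_cons, zero_add, zero_smul,
    mul_neg, neg_neg, of_zero, Matrix.zero_mul, of_symm_zero, Equiv.symm_apply_apply, of_sub_of,
    sub_cons, sub_self, sub_neg_eq_add, gm2, EmbeddingLike.apply_eq_iff_eq, vecCons_inj,
    and_true, true_and, cons_eq_zero_iff]
  and_intros <;> grind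

theorem lie_g1m_gm2 (ψ : Fin 2 → ℝ) (r : ℝ) :
    ⁅g1m ψ, gm2 r⁆ = gm1 ((Real.sqrt 2 * r) • ![-ψ 1, ψ 0]) := by
  have h2 : Real.sqrt 2 * Real.sqrt 2 = 2 := Real.mul_self_sqrt zero_le_two
  simp only [g1m, g2mat, Matrix.zero_apply, add_zero, Fin.isValue, Pi.zero_apply, ← zero_empty,
    cons_zero_zero, zero_div, neg_zero, mul_zero, gm2, Ring.lie_def, cons_mul,
    Nat.succ_eq_add_one, Nat.reduceAdd, vecMul_cons, head_cons, smul_zero, tail_cons,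
    zero_vecMul, neg_smul, smul_cons, smul_eq_mul, neg_cons, zero_add, zero_smul, mul_neg,
    add_cons, of_zero, vecMul_zero, Matrix.zero_mul, of_symm_zero, Equiv.symm_apply_apply,
    neg_neg, of_sub_of, sub_cons, sub_self, sub_zero, zero_sub, gm1, Pi.smul_apply,
    cons_val_zero, cons_val_one, cons_val_fin_one, EmbeddingLike.apply_eq_iff_eq, vecCons_inj,
    neg_inj, and_true, true_and]
  and_intros <;> grind

/-- The bracket 𝔤₁ × 𝔤₋₂ → 𝔤₋₁ satisfies [ψ,[ξ,η]] = 4(ψ(ξ)η − ψ(η)ξ), where ψ ∈ 𝔤₁ is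
identified with a linear functional on 𝔤₋₁ via ψ(ξ) = B(ψ,ξ) = ψ·ξ. -/
theorem bracket_g1_gm2_formula :
    ∀ ψ ξ η : Fin 2 → ℝ,
      g1m ψ * (gm1 ξ * gm1 η - gm1 η * gm1 ξ) -
        (gm1 ξ * gm1 η - gm1 η * gm1 ξ) * g1m ψ
          = gm1 ((4 : ℝ) •
              ((ψ 0 * ξ 0 + ψ 1 * ξ 1) • η - (ψ 0 * η 0 + ψ 1 * η 1) • ξ)) := by
  intro ψ ξ η
  have h2 : Real.sqrt 2 * Real.sqrt 2 = 2 := Real.mul_self_sqrt zero_le_two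
  rw [← vec2_dotProduct ψ ξ, ← vec2_dotProduct ψ η, dotProduct_smul_sub_dotProduct_smul_fin_two,
    ← Ring.lie_def, ← Ring.lie_def, lie_gm1_gm1, lie_g1m_gm2, smul_smul]
  congr 2
  linear_combination (2 * (ξ 0 * η 1 - ξ 1 * η 0)) * h2

end
end
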